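/- Corollary of the abduction merging lemma: under the hypotheses of the merging construction, the instance ⟨H', M', T'⟩ has an explanation if and only if ⟨H, M, T|_{x=true}⟩ has an explanation or ⟨H, M, T|_{x=false}⟩ has an explanation. -/
import Mathlib


/-- Propositional formulas over variables indexed by `Nat`. -/
inductive Fm where
  | var : Nat → Fm
  | tru : Fm
  | fls : Fm
  | neg : Fm → Fm
  | conj : Fm → Fm → Fm
  | disj : Fm → Fm → Fm
deriving DecidableEq

/-- Evaluation of a formula under an assignment. -/
def Fm.eval (σ : Nat → Bool) : Fm → Bool
  | .var n => σ n
  | .tru => true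
  | .fls => false
  | .neg F => !(F.eval σ)
  | .conj F G => F.eval σ && G.eval σ
  | .disj F G => F.eval σ || G.eval σ

/-- `F.subst x v` replaces every occurrence of variable `x` by the constant `v`. -/
def Fm.subst (x : Nat) (v : Bool) : Fm → Fm
  | .var n => if n = x then (if v then .tru else .fls) else .var n
  | .tru => .tru
  | .fls => .fls
  | .neg F => .neg (F.subst x v)
  | .conj F G => .conj (F.subst x v) (G.subst x v)
  | .disj F G => .disj (F.subst x v) (G.subst x v)

/-- `F.occurs x` : variable `x` occurs in `F`. -/
def Fm.occurs (x : Nat) : Fm → Prop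
  | .var n => n = x
  | .tru => False
  | .fls => False
  | .neg F => F.occurs x
  | .conj F G => F.occurs x ∨ G.occurs x
  | .disj F G => F.occurs x ∨ G.occurs x

/-- `σ` satisfies the set of variables `S` (as positive unit assumptions)
together with the theory `T`. -/
def SatSet (σ : Nat → Bool) (S : Set Nat) (T : Set Fm) : Prop :=
  (∀ n ∈ S, σ n = true) ∧ (∀ f ∈ T, f.eval σ = true)

/-- `S` is an explanation of the abduction instance `⟨H, M, T⟩`:
`S ⊆ H`, `S ∪ T` is consistent, and `S ∪ T` entails every manifestation in `M`. -/
def IsExplanation (H M : Set Nat) (T : Set Fm) (S : Set Nat) : Prop :=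
  S ⊆ H ∧ (∃ σ, SatSet σ S T) ∧ (∀ σ, SatSet σ S T → ∀ m ∈ M, σ m = true)

/-- Material implication as a formula. -/
def Fm.impl (f g : Fm) : Fm := .disj (.neg f) g

/-- The merged hypotheses `H' = H ∪ {x⁺, x⁻}`. -/
def mergedH (H : Set Nat) (xp xm : Nat) : Set Nat := H ∪ {xp, xm}

/-- The merged manifestations `M' = M ∪ {q}`. -/
def mergedM (M : Set Nat) (q : Nat) : Set Nat := M ∪ {q}

/-- The merged theory
`T' = T ∪ {x⁺ → q, x⁻ → q, x⁺ → x, x⁻ → ¬x, ¬x⁺ ∨ ¬x⁻}`. -/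
def mergedT (T : Set Fm) (x xp xm q : Nat) : Set Fm :=
  T ∪ {Fm.impl (.var xp) (.var q), Fm.impl (.var xm) (.var q),
       Fm.impl (.var xp) (.var x), Fm.impl (.var xm) (.neg (.var x)),
       .disj (.neg (.var xp)) (.neg (.var xm))}

lemma eval_congr {σ τ : Nat → Bool} : ∀ (F : Fm), (∀ n, F.occurs n → σ n = τ n) → F.eval σ = F.eval τ
  | .var n, h => h n rfl
  | .tru, _ => rfl
  | .fls, _ => rfl
  | .neg F, h => by simp [Fm.eval, eval_congr F h]
  | .conj F G, h => by
      simp [Fm.eval, eval_congr F (fun n hn => h n (Or.inl hn)),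
        eval_congr G (fun n hn => h n (Or.inr hn))]
  | .disj F G, h => by
      simp [Fm.eval, eval_congr F (fun n hn => h n (Or.inl hn)),
        eval_congr G (fun n hn => h n (Or.inr hn))]

lemma eval_subst (σ : Nat → Bool) (x : Nat) (v : Bool) :
    ∀ (F : Fm), (F.subst x v).eval σ = F.eval (fun n => if n = x then v else σ n)
  | .var n => by by_cases h : n = x <;> cases v <;> simp [Fm.subst, Fm.eval, h]
  | .tru => rfl
  | .fls => rfl
  | .neg F => by simp [Fm.subst, Fm.eval, eval_subst σ x v F]
  | .conj F G => by simp [Fm.subst, Fm.eval, eval_subst σ x v F, eval_subst σ x v G]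
  | .disj F G => by simp [Fm.subst, Fm.eval, eval_subst σ x v F, eval_subst σ x v G]

/-- The canonical extension of an assignment used in the merging construction. -/
def mext (x xp xm q : Nat) (v : Bool) (σ : Nat → Bool) : Nat → Bool :=
  fun n => if n = x then v else if n = xp then v else if n = xm then !v else if n = q then true else σ n

lemma merging_back (x xp xm q : Nat) (H M : Set Nat) (T : Set Fm)
    (hdist : x ≠ xp ∧ x ≠ xm ∧ x ≠ q ∧ xp ≠ xm ∧ xp ≠ q ∧ xm ≠ q)
    (hxH : x ∉ H)
    (hxpF : xp ∉ H ∧ xp ∉ M ∧ ∀ f ∈ T, ¬ f.occurs xp)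
    (hxmF : xm ∉ H ∧ xm ∉ M ∧ ∀ f ∈ T, ¬ f.occurs xm)
    (hqF : q ∉ H ∧ q ∉ M ∧ ∀ f ∈ T, ¬ f.occurs q) (v : Bool)
    (h : ∃ S, IsExplanation H M ((Fm.subst x v) '' T) S) :
    ∃ S, IsExplanation (mergedH H xp xm) (mergedM M q) (mergedT T x xp xm q) S := by
  obtain ⟨hxxp, hxxm, hxq, hxpxm, hxpq, hxmq⟩ := hdist
  obtain ⟨S, hSH, ⟨σ, hσS, hσT⟩, hent⟩ := h
  have hfresh : ∀ n ∈ H, n ≠ x ∧ n ≠ xp ∧ n ≠ xm ∧ n ≠ q :=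
    fun n hn => ⟨fun e => hxH (e ▸ hn), fun e => hxpF.1 (e ▸ hn),
      fun e => hxmF.1 (e ▸ hn), fun e => hqF.1 (e ▸ hn)⟩
  have hvx : mext x xp xm q v σ x = v := by simp [mext]
  have hvxp : mext x xp xm q v σ xp = v := by simp [mext, Ne.symm hxxp]
  have hvxm : mext x xp xm q v σ xm = !v := by simp [mext, Ne.symm hxxm, Ne.symm hxpxm]
  have hvq : mext x xp xm q v σ q = true := by simp [mext, Ne.symm hxq, Ne.symm hxpq, Ne.symm hxmq]
  have hvo : ∀ n, n ≠ x → n ≠ xp → n ≠ xm → n ≠ q → mext x xp xm q v σ n = σ n := by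
    intro n h1 h2 h3 h4; simp [mext, h1, h2, h3, h4]
  refine ⟨S ∪ {if v then xp else xm}, ?_, ⟨mext x xp xm q v σ, ?_, ?_⟩, ?_⟩
  · intro n hn
    rcases hn with hn | hn
    · exact Or.inl (hSH hn)
    · right; cases v <;> simp_all
  · intro n hn
    rcases hn with hn | hn
    · obtain ⟨h1, h2, h3, h4⟩ := hfresh n (hSH hn)
      rw [hvo n h1 h2 h3 h4]; exact hσS n hn
    · cases v <;> simp_all
  · intro f hf
    rcases hf with hf | hf
    · have hcongr : f.eval (mext x xp xm q v σ) = f.eval (fun n => if n = x then v else σ n) := by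
        apply eval_congr
        intro n hn
        have h2 : n ≠ xp := fun e => hxpF.2.2 f hf (e ▸ hn)
        have h3 : n ≠ xm := fun e => hxmF.2.2 f hf (e ▸ hn)
        have h4 : n ≠ q := fun e => hqF.2.2 f hf (e ▸ hn)
        by_cases h1 : n = x
        · subst h1; simp [mext]
        · rw [hvo n h1 h2 h3 h4]; simp [h1]
      rw [hcongr, ← eval_subst]
      exact hσT _ ⟨f, hf, rfl⟩
    · simp only [Set.mem_insert_iff, Set.mem_singleton_iff] at hf
      rcases hf with rfl | rfl | rfl | rfl | rfl <;>
        cases v <;> simp [Fm.impl, Fm.eval, hvx, hvxp, hvxm, hvq]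
  · rintro τ ⟨hτS, hτT⟩ m hm
    have hτy : τ (if v then xp else xm) = true := hτS _ (Or.inr rfl)
    have hA := hτT _ (by simp [mergedT] : Fm.impl (.var xp) (.var q) ∈ mergedT T x xp xm q)
    have hB := hτT _ (by simp [mergedT] : Fm.impl (.var xm) (.var q) ∈ mergedT T x xp xm q)
    have hC := hτT _ (by simp [mergedT] : Fm.impl (.var xp) (.var x) ∈ mergedT T x xp xm q)
    have hD := hτT _ (by simp [mergedT] : Fm.impl (.var xm) (.neg (.var x)) ∈ mergedT T x xp xm q)
    have hτx : τ x = v := by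
      cases v <;> simp_all [Fm.impl, Fm.eval]
    have hτq : τ q = true := by
      cases v <;> simp_all [Fm.impl, Fm.eval]
    simp only [mergedM, Set.mem_union, Set.mem_singleton_iff] at hm
    rcases hm with hm | rfl
    · refine hent τ ⟨fun n hn => hτS n (Or.inl hn), ?_⟩ m hm
      rintro g ⟨f, hf, rfl⟩
      rw [eval_subst]
      have hcongr : f.eval (fun n => if n = x then v else τ n) = f.eval τ := by
        apply eval_congr
        intro n _
        by_cases h1 : n = x
        · subst h1; simp [hτx]
        · simp [h1]
      rw [hcongr]
      exact hτT f (Or.inl hf)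
    · exact hτq

lemma merging_fwd (x xp xm q : Nat) (H M : Set Nat) (T : Set Fm)
    (hdist : x ≠ xp ∧ x ≠ xm ∧ x ≠ q ∧ xp ≠ xm ∧ xp ≠ q ∧ xm ≠ q)
    (hxH : x ∉ H) (hxM : x ∉ M)
    (hxpF : xp ∉ H ∧ xp ∉ M ∧ ∀ f ∈ T, ¬ f.occurs xp)
    (hxmF : xm ∉ H ∧ xm ∉ M ∧ ∀ f ∈ T, ¬ f.occurs xm)
    (hqF : q ∉ H ∧ q ∉ M ∧ ∀ f ∈ T, ¬ f.occurs q) (v : Bool) (S' : Set Nat)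
    (hE : IsExplanation (mergedH H xp xm) (mergedM M q) (mergedT T x xp xm q) S')
    (hy : (if v then xp else xm) ∈ S') (hz : (if v then xm else xp) ∉ S') :
    ∃ S, IsExplanation H M ((Fm.subst x v) '' T) S := by
  obtain ⟨hxxp, hxxm, hxq, hxpxm, hxpq, hxmq⟩ := hdist
  obtain ⟨hSH, ⟨σ, hσS, hσT⟩, hent⟩ := hE
  refine ⟨S' \ {xp, xm}, ?_, ⟨σ, ?_, ?_⟩, ?_⟩
  · rintro n ⟨hn, hn2⟩
    simp only [Set.mem_insert_iff, Set.mem_singleton_iff] at hn2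
    push_neg at hn2
    rcases hSH hn with hnH | hnpm
    · exact hnH
    · simp only [Set.mem_insert_iff, Set.mem_singleton_iff] at hnpm
      rcases hnpm with rfl | rfl
      · exact absurd rfl hn2.1
      · exact absurd rfl hn2.2
  · exact fun n hn => hσS n hn.1
  · have hσy : σ (if v then xp else xm) = true := hσS _ hy
    have hC := hσT _ (by simp [mergedT] : Fm.impl (.var xp) (.var x) ∈ mergedT T x xp xm q)
    have hD := hσT _ (by simp [mergedT] : Fm.impl (.var xm) (.neg (.var x)) ∈ mergedT T x xp xm q)
    have hσx : σ x = v := by cases v <;> simp_all [Fm.impl, Fm.eval]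
    rintro g ⟨f, hf, rfl⟩
    rw [eval_subst]
    have hcongr : f.eval (fun n => if n = x then v else σ n) = f.eval σ := by
      apply eval_congr
      intro n _
      by_cases h1 : n = x
      · subst h1; simp [hσx]
      · simp [h1]
    rw [hcongr]
    exact hσT f (Or.inl hf)
  · intro τ hτ m hm
    obtain ⟨hτS, hτT⟩ := hτ
    have hmfresh : m ≠ x ∧ m ≠ xp ∧ m ≠ xm ∧ m ≠ q :=
      ⟨fun e => hxM (e ▸ hm), fun e => hxpF.2.1 (e ▸ hm),
        fun e => hxmF.2.1 (e ▸ hm), fun e => hqF.2.1 (e ▸ hm)⟩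
    have hvx : mext x xp xm q v τ x = v := by simp [mext]
    have hvxp : mext x xp xm q v τ xp = v := by simp [mext, Ne.symm hxxp]
    have hvxm : mext x xp xm q v τ xm = !v := by simp [mext, Ne.symm hxxm, Ne.symm hxpxm]
    have hvq : mext x xp xm q v τ q = true := by
      simp [mext, Ne.symm hxq, Ne.symm hxpq, Ne.symm hxmq]
    have hvo : ∀ n, n ≠ x → n ≠ xp → n ≠ xm → n ≠ q → mext x xp xm q v τ n = τ n := by
      intro n h1 h2 h3 h4; simp [mext, h1, h2, h3, h4]
    have hsat : SatSet (mext x xp xm q v τ) S' (mergedT T x xp xm q) := by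
      constructor
      · intro n hn
        rcases hSH hn with hnH | hnpm
        · have h1 : n ≠ x := fun e => hxH (e ▸ hnH)
          have h2 : n ≠ xp := fun e => hxpF.1 (e ▸ hnH)
          have h3 : n ≠ xm := fun e => hxmF.1 (e ▸ hnH)
          have h4 : n ≠ q := fun e => hqF.1 (e ▸ hnH)
          rw [hvo n h1 h2 h3 h4]
          exact hτS n ⟨hn, by simp [h2, h3]⟩
        · simp only [Set.mem_insert_iff, Set.mem_singleton_iff] at hnpm
          rcases hnpm with rfl | rfl <;> cases v <;> simp_all
      · intro f hf
        rcases hf with hf | hf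
        · have hcongr : f.eval (mext x xp xm q v τ) = f.eval (fun n => if n = x then v else τ n) := by
            apply eval_congr
            intro n hn
            have h2 : n ≠ xp := fun e => hxpF.2.2 f hf (e ▸ hn)
            have h3 : n ≠ xm := fun e => hxmF.2.2 f hf (e ▸ hn)
            have h4 : n ≠ q := fun e => hqF.2.2 f hf (e ▸ hn)
            by_cases h1 : n = x
            · subst h1; simp [mext]
            · rw [hvo n h1 h2 h3 h4]; simp [h1]
          rw [hcongr, ← eval_subst]
          exact hτT _ ⟨f, hf, rfl⟩
        · simp only [Set.mem_insert_iff, Set.mem_singleton_iff] at hf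
          rcases hf with rfl | rfl | rfl | rfl | rfl <;>
            cases v <;> simp [Fm.impl, Fm.eval, hvx, hvxp, hvxm, hvq]
    have := hent _ hsat m (Or.inl hm)
    rwa [hvo m hmfresh.1 hmfresh.2.1 hmfresh.2.2.1 hmfresh.2.2.2] at this

/-- the merged instance has an explanation iff one of the two
substituted instances has an explanation. -/
theorem abduction_merging_existence (x xp xm q : Nat) (H M : Set Nat) (T : Set Fm)
    (hdist : x ≠ xp ∧ x ≠ xm ∧ x ≠ q ∧ xp ≠ xm ∧ xp ≠ q ∧ xm ≠ q)
    (hxH : x ∉ H) (hxM : x ∉ M)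
    (hxpF : xp ∉ H ∧ xp ∉ M ∧ ∀ f ∈ T, ¬ f.occurs xp)
    (hxmF : xm ∉ H ∧ xm ∉ M ∧ ∀ f ∈ T, ¬ f.occurs xm)
    (hqF : q ∉ H ∧ q ∉ M ∧ ∀ f ∈ T, ¬ f.occurs q) :
    (∃ S, IsExplanation (mergedH H xp xm) (mergedM M q) (mergedT T x xp xm q) S) ↔
      ((∃ S, IsExplanation H M ((Fm.subst x true) '' T) S) ∨
       (∃ S, IsExplanation H M ((Fm.subst x false) '' T) S)) := by
  obtain ⟨hxxp, hxxm, hxq, hxpxm, hxpq, hxmq⟩ := id hdist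
  constructor
  · rintro ⟨S', hE⟩
    obtain ⟨σ, hσS, hσT⟩ := hE.2.1
    by_cases hp : xp ∈ S'
    · have hm' : xm ∉ S' := by
        intro hm'
        have h5 := hσT _ (by simp [mergedT] :
          Fm.disj (.neg (.var xp)) (.neg (.var xm)) ∈ mergedT T x xp xm q)
        simp [Fm.eval, hσS _ hp, hσS _ hm'] at h5
      exact Or.inl (merging_fwd x xp xm q H M T hdist hxH hxM hxpF hxmF hqF true S' hE
        (by simpa using hp) (by simpa using hm'))
    · by_cases hm : xm ∈ S'
      · exact Or.inr (merging_fwd x xp xm q H M T hdist hxH hxM hxpF hxmF hqF false S' hE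
          (by simpa using hm) (by simpa using hp))
      · exfalso
        set σ₀ : Nat → Bool := fun n =>
          if n = xp then false else if n = xm then false else if n = q then false else σ n with hσ₀
        have hsat : SatSet σ₀ S' (mergedT T x xp xm q) := by
          constructor
          · intro n hn
            rcases hE.1 hn with hnH | hnpm
            · have h2 : n ≠ xp := fun e => hxpF.1 (e ▸ hnH)
              have h3 : n ≠ xm := fun e => hxmF.1 (e ▸ hnH)
              have h4 : n ≠ q := fun e => hqF.1 (e ▸ hnH)
              simp only [hσ₀, if_neg h2, if_neg h3, if_neg h4]
              exact hσS n hn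
            · simp only [Set.mem_insert_iff, Set.mem_singleton_iff] at hnpm
              rcases hnpm with rfl | rfl
              · exact absurd hn hp
              · exact absurd hn hm
          · intro f hf
            rcases hf with hf | hf
            · have hcongr : f.eval σ₀ = f.eval σ := by
                apply eval_congr
                intro n hn
                have h2 : n ≠ xp := fun e => hxpF.2.2 f hf (e ▸ hn)
                have h3 : n ≠ xm := fun e => hxmF.2.2 f hf (e ▸ hn)
                have h4 : n ≠ q := fun e => hqF.2.2 f hf (e ▸ hn)
                simp only [hσ₀, if_neg h2, if_neg h3, if_neg h4]
              rw [hcongr]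
              exact hσT f (Or.inl hf)
            · have e1 : σ₀ xp = false := by simp [hσ₀]
              have e2 : σ₀ xm = false := by simp [hσ₀, Ne.symm hxpxm]
              have e3 : σ₀ q = false := by simp [hσ₀, Ne.symm hxpq, Ne.symm hxmq]
              simp only [Set.mem_insert_iff, Set.mem_singleton_iff] at hf
              rcases hf with rfl | rfl | rfl | rfl | rfl <;>
                simp [Fm.impl, Fm.eval, e1, e2, e3]
        have hq' := hE.2.2 σ₀ hsat q (Or.inr rfl)
        simp [hσ₀, Ne.symm hxpq, Ne.symm hxmq] at hq'
  · rintro (h | h)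
    · exact merging_back x xp xm q H M T hdist hxH hxpF hxmF hqF true h
    · exact merging_back x xp xm q H M T hdist hxH hxpF hxmF hqF false h
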